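/- arXiv:1405.0448 — 3 statements merged into one kernel-verified Lean document; each statement's English description precedes it below -/
import Mathlib

section
/- For every x in the unit simplex Δ of probability measures on F*, the probability measure π(x) = (xA)/⟨xA, 1⟩, where A = (I - P̂)^{-1}, is a stationary distribution of the Markov kernel K[x] defined by K[x]_{i,j} = P_{i,j} + P_{i,0} x(j); i.e. π(x) K[x] = π(x). -/
/-- For x in the simplex, π(x) = (xA)/⟨xA,1⟩ with A = (I-P̂)⁻¹ is a stationary
distribution of the kernel K[x]_{i,j} = P_{i,j} + P_{i,0} x(j): π(x) K[x] = π(x). -/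
theorem stmt3 {d : ℕ} (hd : 2 ≤ d)
    (P : Matrix (Fin d) (Fin d) ℝ) (p0 : Fin d → ℝ)
    (hP : ∀ i j, 0 ≤ P i j) (hp0 : ∀ i, 0 ≤ p0 i)
    (hrow : ∀ i, ∑ j, P i j + p0 i = 1)
    (A : Matrix (Fin d) (Fin d) ℝ)
    (hA1 : A * (1 - P) = 1) (hA2 : (1 - P) * A = 1)
    (hAnn : ∀ i j, 0 ≤ A i j) (hAdiag : ∀ i, 1 ≤ A i i)
    (x : Fin d → ℝ) (hx : ∀ i, 0 ≤ x i) (hx1 : ∑ i, x i = 1) :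
    ∀ j, ∑ i, (Matrix.vecMul x A i / ∑ k, Matrix.vecMul x A k) * (P i j + p0 i * x j)
      = Matrix.vecMul x A j / ∑ k, Matrix.vecMul x A k := by
  set y : Fin d → ℝ := Matrix.vecMul x A with hy
  -- y (1-P) = x
  have hyP : ∀ j, Matrix.vecMul y P j = y j - x j := by
    have h : Matrix.vecMul y (1 - P) = x := by
      rw [hy, Matrix.vecMul_vecMul, hA1, Matrix.vecMul_one]
    intro j
    have := congrFun h j
    rw [Matrix.vecMul_sub, Matrix.vecMul_one] at this
    simp only [Pi.sub_apply] at this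
    linarith
  have hyPsum : ∀ j, ∑ i, y i * P i j = y j - x j := by
    intro j
    rw [← hyP j]
    simp [Matrix.vecMul, dotProduct]
  have hweight : ∑ i, y i * p0 i = 1 := by
    have h1 : ∀ i, p0 i = 1 - ∑ j, P i j := fun i => by linarith [hrow i]
    calc ∑ i, y i * p0 i = ∑ i, (y i - ∑ j, y i * P i j) := by
          refine Finset.sum_congr rfl fun i _ => ?_
          rw [h1 i, mul_sub, mul_one, Finset.mul_sum]
      _ = ∑ i, y i - ∑ j, ∑ i, y i * P i j := by
          rw [Finset.sum_sub_distrib, Finset.sum_comm]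
      _ = ∑ i, y i - ∑ j, (y j - x j) := by
          simp only [hyPsum]
      _ = ∑ j, x j := by rw [Finset.sum_sub_distrib]; ring
      _ = 1 := hx1
  have hynn : ∀ i, 0 ≤ y i := by
    intro i
    simp only [hy, Matrix.vecMul, dotProduct]
    exact Finset.sum_nonneg fun k _ => mul_nonneg (hx k) (hAnn k i)
  have hS : (1:ℝ) ≤ ∑ k, y k := by
    have : ∑ k, y k = ∑ i, x i * ∑ k, A i k := by
      simp only [hy, Matrix.vecMul, dotProduct]
      rw [Finset.sum_comm]
      simp [Finset.mul_sum]
    rw [this, ← hx1]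
    refine Finset.sum_le_sum fun i _ => ?_
    calc x i = x i * 1 := (mul_one _).symm
      _ ≤ x i * ∑ k, A i k := by
          refine mul_le_mul_of_nonneg_left ?_ (hx i)
          calc (1:ℝ) ≤ A i i := hAdiag i
            _ ≤ ∑ k, A i k := Finset.single_le_sum (fun k _ => hAnn i k) (Finset.mem_univ i)
  have hS0 : (∑ k, y k) ≠ 0 := by linarith
  intro j
  have key : ∑ i, y i * (P i j + p0 i * x j) = y j := by
    calc ∑ i, y i * (P i j + p0 i * x j)
        = (∑ i, y i * P i j) + (∑ i, y i * p0 i) * x j := by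
          rw [Finset.sum_mul, ← Finset.sum_add_distrib]
          refine Finset.sum_congr rfl fun i _ => ?_; ring
      _ = (y j - x j) + 1 * x j := by rw [hyPsum, hweight]
      _ = y j := by ring
  calc ∑ i, (y i / ∑ k, y k) * (P i j + p0 i * x j)
      = (∑ i, y i * (P i j + p0 i * x j)) / ∑ k, y k := by
        rw [Finset.sum_div]
        refine Finset.sum_congr rfl fun i _ => ?_; ring
    _ = y j / ∑ k, y k := by rw [key]
end

section
/- Conversely, for x ∈ Δ, any stationary distribution π of K[x] (π K[x] = π, π ∈ Δ) satisfies π (I - P̂) = γ x where γ = ∑_{i∈F*} π(i) P_{i,0}, and hence π = (xA)/⟨xA, 1⟩ with A = (I-P̂)^{-1}; in particular the stationary distribution of K[x] is unique. -/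
/-- Conversely, any stationary distribution π of K[x] satisfies π(I - P̂) = γ x with
γ = ∑ π(i) P_{i,0}, hence π = (xA)/⟨xA,1⟩ with A = (I-P̂)⁻¹: the stationary
distribution of K[x] is unique. -/
theorem stmt4 {d : ℕ} (hd : 2 ≤ d)
    (P : Matrix (Fin d) (Fin d) ℝ) (p0 : Fin d → ℝ)
    (hP : ∀ i j, 0 ≤ P i j) (hp0 : ∀ i, 0 ≤ p0 i)
    (hrow : ∀ i, ∑ j, P i j + p0 i = 1)
    (hirr : ∀ i j, ∃ n : ℕ, 0 < (P ^ n) i j) (habs : ∃ i, 0 < p0 i)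
    (A : Matrix (Fin d) (Fin d) ℝ)
    (hA1 : A * (1 - P) = 1) (hA2 : (1 - P) * A = 1)
    (x : Fin d → ℝ) (hx : ∀ i, 0 ≤ x i) (hx1 : ∑ i, x i = 1)
    (π : Fin d → ℝ) (hπ : ∀ i, 0 ≤ π i) (hπ1 : ∑ i, π i = 1)
    (hstat : ∀ j, ∑ i, π i * (P i j + p0 i * x j) = π j) :
    (∀ j, Matrix.vecMul π (1 - P) j = (∑ i, π i * p0 i) * x j) ∧
      ∀ j, π j = Matrix.vecMul x A j / ∑ k, Matrix.vecMul x A k := by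
  set γ : ℝ := ∑ i, π i * p0 i with hγ
  have h1 : ∀ j, Matrix.vecMul π (1 - P) j = γ * x j := by
    intro j
    have hs := hstat j
    have hsplit : ∑ i, π i * (P i j + p0 i * x j)
        = (∑ i, π i * P i j) + γ * x j := by
      rw [hγ, Finset.sum_mul, ← Finset.sum_add_distrib]
      congr 1; ext i; ring
    rw [Matrix.vecMul_sub, Matrix.vecMul_one]
    have : Matrix.vecMul π P j = ∑ i, π i * P i j := by
      simp [Matrix.vecMul, dotProduct]
    rw [hsplit] at hs
    simp [this]
    linarith
  have hπeq : ∀ j, π j = γ * Matrix.vecMul x A j := by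
    have hv : Matrix.vecMul π (1 - P) = γ • x := by
      funext j; simpa using h1 j
    have h2 : Matrix.vecMul (Matrix.vecMul π (1 - P)) A
        = Matrix.vecMul (γ • x) A := by rw [hv]
    rw [Matrix.vecMul_vecMul, hA2, Matrix.vecMul_one, Matrix.smul_vecMul] at h2
    intro j
    rw [h2]; simp
  have hsum : γ * (∑ k, Matrix.vecMul x A k) = 1 := by
    rw [Finset.mul_sum, ← hπ1]
    exact Finset.sum_congr rfl fun k _ => (hπeq k).symm
  have hS : (∑ k, Matrix.vecMul x A k) ≠ 0 := by
    intro h; rw [h, mul_zero] at hsum; exact zero_ne_one hsum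
  refine ⟨h1, fun j => ?_⟩
  rw [eq_div_iff hS, hπeq j]
  linear_combination (Matrix.vecMul x A j) * hsum
end

section
/- Φ and Φ₂ have the same orbits up to time reparametrization: Φ(s(t,x), x) = Φ₂(t,x) where s(t,x) = ∫₀^t ⟨Φ₂(u,x) A, 1⟩ du, and t ↦ s(t,x) is strictly increasing. -/
/-!
With `w t = x e^{tA}`, the curve `Φ₂ = w / ⟨w, 1⟩` satisfies
`Φ₂' = Φ₂ A - ⟨Φ₂ A, 1⟩ Φ₂ = c(t) h(Φ₂)` with `c(t) = ⟨Φ₂(t) A, 1⟩ = s'(t)`, and by the chain rule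
`t ↦ Φ(s t, x)` solves the same non-autonomous equation `y' = c(t) h(y)`. For `t ≥ 0` the matrix
`e^{tA}` is entrywise nonnegative, so `Φ₂` stays in the simplex and `c > 0`, whence `s` is strictly
increasing. Both curves live in the simplex, a compact convex set on a neighbourhood of which `h` is
smooth, hence Lipschitz; uniqueness for Lipschitz ODEs makes them equal.
-/

open NormedSpace Matrix Set
open scoped NNReal

namespace Matrix

variable {n : Type*} [Fintype n] [DecidableEq n]

theorem exp_apply_nonneg {A : Matrix n n ℝ} (hA : ∀ i j, 0 ≤ A i j) (i j : n) :
    0 ≤ exp A i j := by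
  open scoped Norms.Operator in
  have hsum := exp_series_hasSum_exp' (𝕂 := ℝ) A
  have hij : HasSum (fun k : ℕ => ((k.factorial : ℝ)⁻¹ • A ^ k) i j) (exp A i j) :=
    Pi.hasSum.mp (Pi.hasSum.mp hsum i) j
  exact hij.nonneg fun k => mul_nonneg (by positivity) (pow_apply_nonneg hA k i j)

theorem vecMul_exp_ne_zero {x : n → ℝ} (hx : x ≠ 0) (M : Matrix n n ℝ) : x ᵥ* exp M ≠ 0 := by
  intro h
  apply hx
  simpa [vecMul_vecMul, ← exp_add_of_commute M (-M) (Commute.neg_right rfl)] using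
    congrArg (· ᵥ* exp (-M)) h

theorem hasDerivAt_vecMul_exp_smul (x : n → ℝ) (A : Matrix n n ℝ) (t : ℝ) :
    HasDerivAt (fun u : ℝ => x ᵥ* exp (u • A)) (x ᵥ* exp (t • A) ᵥ* A) t := by
  open scoped Norms.Operator in
  have := (vecMulBilin ℝ ℝ x).toContinuousLinearMap.hasFDerivAt.comp_hasDerivAt t
    (hasDerivAt_exp_smul_const A t)
  rw [vecMul_vecMul]
  exact this

end Matrix

section Normalize

variable {n : Type*} [Fintype n]

noncomputable def simplexNormalize (w : n → ℝ) : n → ℝ := fun j => w j / ∑ k, w k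

/-- The paper's `h`. -/
noncomputable def normalizedLinearField (A : Matrix n n ℝ) (y : n → ℝ) : n → ℝ :=
  fun j => (y ᵥ* A) j / ∑ k, (y ᵥ* A) k - y j

theorem simplexNormalize_of_mem_stdSimplex {y : n → ℝ} (hy : y ∈ stdSimplex ℝ n) :
    simplexNormalize y = y := by
  ext j
  simp [simplexNormalize, hy.2]

theorem simplexNormalize_eq_smul (w : n → ℝ) : simplexNormalize w = (∑ k, w k)⁻¹ • w := by
  ext j
  exact div_eq_inv_mul _ _

theorem ne_zero_of_mem_stdSimplex {y : n → ℝ} (hy : y ∈ stdSimplex ℝ n) : y ≠ 0 := by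
  rintro rfl
  simpa using hy.2

theorem simplexNormalize_mem_stdSimplex {w : n → ℝ} (hw : ∀ j, 0 ≤ w j) (hw0 : w ≠ 0) :
    simplexNormalize w ∈ stdSimplex ℝ n := by
  have hS : 0 < ∑ k, w k := Fintype.sum_pos (lt_of_le_of_ne hw (Ne.symm hw0))
  refine ⟨fun j => div_nonneg (hw j) hS.le, ?_⟩
  simp only [simplexNormalize, ← Finset.sum_div, div_self hS.ne']

theorem smul_normalizedLinearField {A : Matrix n n ℝ} {y : n → ℝ} (hy : ∑ k, (y ᵥ* A) k ≠ 0) :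
    (∑ k, (y ᵥ* A) k) • normalizedLinearField A y = y ᵥ* A - (∑ k, (y ᵥ* A) k) • y := by
  ext j
  simp only [normalizedLinearField, Pi.smul_apply, Pi.sub_apply, smul_eq_mul]
  field_simp

theorem HasDerivAt.simplexNormalize {A : Matrix n n ℝ} {w : ℝ → n → ℝ} {t : ℝ}
    (hw : HasDerivAt w (w t ᵥ* A) t) (hS : ∑ k, w t k ≠ 0) :
    HasDerivAt (fun u => simplexNormalize (w u))
      (simplexNormalize (w t) ᵥ* A -
        (∑ k, (simplexNormalize (w t) ᵥ* A) k) • simplexNormalize (w t)) t := by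
  have hsum : HasDerivAt (fun u => ∑ k, w u k) (∑ k, (w t ᵥ* A) k) t :=
    HasDerivAt.fun_sum fun k _ => hasDerivAt_pi.mp hw k
  simp only [simplexNormalize_eq_smul]
  refine ((hsum.inv hS).smul hw).congr_deriv ?_
  ext j
  simp only [smul_vecMul, Pi.sub_apply, Pi.add_apply, Pi.smul_apply, Pi.inv_apply, smul_eq_mul,
    ← Finset.mul_sum]
  field_simp
  ring

theorem normalizedLinearField_lipschitzOnWith {A : Matrix n n ℝ}
    (hA : ∀ y ∈ stdSimplex ℝ n, 0 < ∑ k, (y ᵥ* A) k) :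
    ∃ K, LipschitzOnWith K (normalizedLinearField A) (stdSimplex ℝ n) := by
  refine ContDiffOn.exists_lipschitzOnWith ?_ one_ne_zero (convex_stdSimplex ℝ n)
    (isCompact_stdSimplex ℝ n)
  refine contDiffOn_pi.mpr fun j => ?_
  simp only [normalizedLinearField, vecMul, dotProduct]
  refine ContDiffOn.sub (ContDiffOn.div ?_ ?_ fun y hy => (hA y hy).ne') ?_ <;> fun_prop

end Normalize

theorem ODE_solution_unique_of_hasDerivWithinAt_smul {E : Type*} [NormedAddCommGroup E]
    [NormedSpace ℝ E] {f : E → E} {K : ℝ≥0} {s : Set E} (hf : LipschitzOnWith K f s)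
    {c : ℝ → ℝ} {a b : ℝ} (hc : ContinuousOn c (Icc a b)) {y z : ℝ → E}
    (hy : ContinuousOn y (Icc a b))
    (hy' : ∀ t ∈ Ico a b, HasDerivWithinAt y (c t • f (y t)) (Ici t) t)
    (hys : ∀ t ∈ Ico a b, y t ∈ s) (hz : ContinuousOn z (Icc a b))
    (hz' : ∀ t ∈ Ico a b, HasDerivWithinAt z (c t • f (z t)) (Ici t) t)
    (hzs : ∀ t ∈ Ico a b, z t ∈ s) (ha : y a = z a) :
    EqOn y z (Icc a b) := by
  obtain ⟨M, hM⟩ := isCompact_Icc.exists_bound_of_continuousOn hc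
  have hv : ∀ t ∈ Ico a b, LipschitzOnWith (M.toNNReal * K) (fun e => c t • f e) s := by
    intro t ht
    refine ((lipschitzWith_smul (c t)).comp_lipschitzOnWith hf).weaken ?_
    gcongr
    rw [← NNReal.coe_le_coe, coe_nnnorm]
    exact (hM t (Ico_subset_Icc_self ht)).trans (Real.le_coe_toNNReal M)
  exact ODE_solution_unique_of_mem_Icc_right (s := fun _ => s) hv hy hy' hys hz hz' hzs ha

theorem hasDerivAt_integral_of_continuousOn {E : Type*} [NormedAddCommGroup E]
    [NormedSpace ℝ E] [CompleteSpace E] {f : ℝ → E} {U : Set ℝ} (hU : IsOpen U)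
    (hf : ContinuousOn f U) {a b : ℝ} (hab : uIcc a b ⊆ U) :
    HasDerivAt (fun u => ∫ v in a..u, f v) (f b) b :=
  intervalIntegral.integral_hasDerivAt_right ((hf.mono hab).intervalIntegrable)
    (hf.stronglyMeasurableAtFilter hU b (hab right_mem_uIcc))
    (hf.continuousAt (hU.mem_nhds (hab right_mem_uIcc)))

section NormalizedExpFlow

variable {n : Type*} [Fintype n] [DecidableEq n] {A : Matrix n n ℝ} {x : n → ℝ}

/-- The paper's `Φ₂(·, x)`. -/
noncomputable def normalizedExpFlow (A : Matrix n n ℝ) (x : n → ℝ) (t : ℝ) : n → ℝ :=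
  simplexNormalize (x ᵥ* exp (t • A))

theorem normalizedExpFlow_zero (A : Matrix n n ℝ) (x : n → ℝ) :
    normalizedExpFlow A x 0 = simplexNormalize x := by
  simp [normalizedExpFlow]

theorem isOpen_setOf_sum_vecMul_exp_ne_zero (A : Matrix n n ℝ) (x : n → ℝ) :
    IsOpen {t : ℝ | ∑ k, (x ᵥ* exp (t • A)) k ≠ 0} :=
  isOpen_ne_fun (continuous_finsetSum _ fun k _ => (continuous_apply k).comp
    (continuous_iff_continuousAt.mpr fun t => (hasDerivAt_vecMul_exp_smul x A t).continuousAt))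
    continuous_const

theorem vecMul_exp_smul_nonneg (hA : ∀ i j, 0 ≤ A i j) (hx : ∀ i, 0 ≤ x i) {t : ℝ}
    (ht : 0 ≤ t) (j : n) : 0 ≤ (x ᵥ* exp (t • A)) j :=
  Finset.sum_nonneg fun i _ =>
    mul_nonneg (hx i) (exp_apply_nonneg (fun i j => mul_nonneg ht (hA i j)) i j)

theorem sum_vecMul_exp_pos (hA : ∀ i j, 0 ≤ A i j) (hx : ∀ i, 0 ≤ x i) (hx0 : x ≠ 0) {t : ℝ}
    (ht : 0 ≤ t) : 0 < ∑ k, (x ᵥ* exp (t • A)) k :=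
  Fintype.sum_pos (lt_of_le_of_ne (vecMul_exp_smul_nonneg hA hx ht)
    (vecMul_exp_ne_zero hx0 _).symm)

theorem normalizedExpFlow_mem_stdSimplex (hA : ∀ i j, 0 ≤ A i j) (hx : ∀ i, 0 ≤ x i)
    (hx0 : x ≠ 0) {t : ℝ} (ht : 0 ≤ t) : normalizedExpFlow A x t ∈ stdSimplex ℝ n :=
  simplexNormalize_mem_stdSimplex (vecMul_exp_smul_nonneg hA hx ht) (vecMul_exp_ne_zero hx0 _)

theorem hasDerivAt_normalizedExpFlow {t : ℝ} (ht : ∑ k, (x ᵥ* exp (t • A)) k ≠ 0) :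
    HasDerivAt (normalizedExpFlow A x)
      (normalizedExpFlow A x t ᵥ* A -
        (∑ k, (normalizedExpFlow A x t ᵥ* A) k) • normalizedExpFlow A x t) t :=
  (hasDerivAt_vecMul_exp_smul x A t).simplexNormalize ht

theorem continuousOn_sum_vecMul_normalizedExpFlow :
    ContinuousOn (fun t => ∑ k, (normalizedExpFlow A x t ᵥ* A) k)
      {t : ℝ | ∑ k, (x ᵥ* exp (t • A)) k ≠ 0} := by
  intro t ht
  have hsum : Continuous fun y : n → ℝ => ∑ k, (y ᵥ* A) k := by
    simp only [vecMul, dotProduct]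
    fun_prop
  exact (hsum.continuousAt.comp (hasDerivAt_normalizedExpFlow ht).continuousAt).continuousWithinAt

theorem hasDerivAt_normalizedExpFlow_eq_smul (hA : ∀ i j, 0 ≤ A i j)
    (hApos : ∀ y ∈ stdSimplex ℝ n, 0 < ∑ k, (y ᵥ* A) k) (hx : ∀ i, 0 ≤ x i) (hx0 : x ≠ 0)
    {t : ℝ} (ht : 0 ≤ t) :
    HasDerivAt (normalizedExpFlow A x) ((∑ k, (normalizedExpFlow A x t ᵥ* A) k) •
      normalizedLinearField A (normalizedExpFlow A x t)) t := by
  rw [smul_normalizedLinearField (hApos _ (normalizedExpFlow_mem_stdSimplex hA hx hx0 ht)).ne']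
  exact hasDerivAt_normalizedExpFlow (sum_vecMul_exp_pos hA hx hx0 ht).ne'

theorem hasDerivAt_integral_sum_vecMul_normalizedExpFlow (hA : ∀ i j, 0 ≤ A i j)
    (hx : ∀ i, 0 ≤ x i) (hx0 : x ≠ 0) {t : ℝ} (ht : 0 ≤ t) :
    HasDerivAt (fun t => ∫ u in (0 : ℝ)..t, ∑ k, (normalizedExpFlow A x u ᵥ* A) k)
      (∑ k, (normalizedExpFlow A x t ᵥ* A) k) t :=
  hasDerivAt_integral_of_continuousOn (isOpen_setOf_sum_vecMul_exp_ne_zero A x)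
    continuousOn_sum_vecMul_normalizedExpFlow fun _ hu =>
      (sum_vecMul_exp_pos hA hx hx0 (uIcc_of_le ht ▸ hu).1).ne'

theorem strictMonoOn_integral_sum_vecMul_normalizedExpFlow (hA : ∀ i j, 0 ≤ A i j)
    (hApos : ∀ y ∈ stdSimplex ℝ n, 0 < ∑ k, (y ᵥ* A) k) (hx : ∀ i, 0 ≤ x i) (hx0 : x ≠ 0) :
    StrictMonoOn (fun t => ∫ u in (0 : ℝ)..t, ∑ k, (normalizedExpFlow A x u ᵥ* A) k) (Ici 0) :=
  strictMonoOn_of_hasDerivWithinAt_pos (convex_Ici 0)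
    (fun _ ht => (hasDerivAt_integral_sum_vecMul_normalizedExpFlow hA hx hx0 ht).continuousAt
      |>.continuousWithinAt)
    (fun _ ht => (hasDerivAt_integral_sum_vecMul_normalizedExpFlow hA hx hx0
      (interior_subset ht)).hasDerivWithinAt)
    (fun _ ht => hApos _ (normalizedExpFlow_mem_stdSimplex hA hx hx0 (interior_subset ht)))

end NormalizedExpFlow

theorem stmt14_general {d : ℕ} (A : Matrix (Fin d) (Fin d) ℝ)
    (hAnn : ∀ i j, 0 ≤ A i j)
    (hApos : ∀ y : Fin d → ℝ, (∀ i, 0 ≤ y i) → y ≠ 0 → 0 < ∑ j, Matrix.vecMul y A j)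
    (Φ : ℝ → (Fin d → ℝ) → Fin d → ℝ)
    (hΦ0 : ∀ y, Φ 0 y = y)
    (hΦΔ : ∀ y : Fin d → ℝ, ((∀ i, 0 ≤ y i) ∧ ∑ i, y i = 1) → ∀ t : ℝ, 0 ≤ t →
      (∀ i, 0 ≤ Φ t y i) ∧ ∑ i, Φ t y i = 1)
    (hode : ∀ y : Fin d → ℝ, ((∀ i, 0 ≤ y i) ∧ ∑ i, y i = 1) → ∀ t : ℝ, 0 ≤ t →
      HasDerivAt (fun u => Φ u y)
        (fun j => Matrix.vecMul (Φ t y) A j / (∑ k, Matrix.vecMul (Φ t y) A k) - Φ t y j) t)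
    (x : Fin d → ℝ) (hx : ∀ i, 0 ≤ x i) (hx1 : ∑ i, x i = 1)
    (Φ₂ : ℝ → Fin d → ℝ)
    (hΦ₂ : ∀ t j, Φ₂ t j = Matrix.vecMul x (NormedSpace.exp (t • A)) j /
        ∑ k, Matrix.vecMul x (NormedSpace.exp (t • A)) k)
    (s : ℝ → ℝ)
    (hs : ∀ t, s t = ∫ u in (0 : ℝ)..t, ∑ j, Matrix.vecMul (Φ₂ u) A j) :
    StrictMonoOn s (Set.Ici 0) ∧ ∀ t : ℝ, 0 ≤ t → Φ (s t) x = Φ₂ t := by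
  have hxΔ : x ∈ stdSimplex ℝ (Fin d) := ⟨hx, hx1⟩
  have hx0 := ne_zero_of_mem_stdSimplex hxΔ
  have hApos' : ∀ y ∈ stdSimplex ℝ (Fin d), 0 < ∑ k, (y ᵥ* A) k := fun y hy =>
    hApos y hy.1 (ne_zero_of_mem_stdSimplex hy)
  obtain rfl : Φ₂ = normalizedExpFlow A x := funext fun t => funext (hΦ₂ t)
  set c := fun t => ∑ k, (normalizedExpFlow A x t ᵥ* A) k
  have hs_eq : s = fun t => ∫ u in (0 : ℝ)..t, c u := funext hs
  have hs' : ∀ t, 0 ≤ t → HasDerivAt s (c t) t := fun t ht =>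
    hs_eq ▸ hasDerivAt_integral_sum_vecMul_normalizedExpFlow hAnn hx hx0 ht
  have hmono : StrictMonoOn s (Ici 0) :=
    hs_eq ▸ strictMonoOn_integral_sum_vecMul_normalizedExpFlow hAnn hApos' hx hx0
  have hs_nonneg : ∀ t, 0 ≤ t → 0 ≤ s t := fun t ht => by
    simpa [hs] using hmono.monotoneOn self_mem_Ici ht ht
  have hΦ' : ∀ t, 0 ≤ t → HasDerivAt (fun u => Φ (s u) x)
      (c t • normalizedLinearField A (Φ (s t) x)) t := fun t ht =>
    (hode x hxΔ (s t) (hs_nonneg t ht)).scomp t (hs' t ht)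
  have hΦ₂' : ∀ t, 0 ≤ t → HasDerivAt (normalizedExpFlow A x)
      (c t • normalizedLinearField A (normalizedExpFlow A x t)) t := fun t ht =>
    hasDerivAt_normalizedExpFlow_eq_smul hAnn hApos' hx hx0 ht
  refine ⟨hmono, fun T hT => ODE_solution_unique_of_hasDerivWithinAt_smul
    (normalizedLinearField_lipschitzOnWith hApos').choose_spec
    (continuousOn_sum_vecMul_normalizedExpFlow.mono fun t ht =>
      (sum_vecMul_exp_pos hAnn hx hx0 ht.1).ne')
    (fun t ht => (hΦ' t ht.1).continuousAt.continuousWithinAt)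
    (fun t ht => (hΦ' t ht.1).hasDerivWithinAt)
    (fun t ht => hΦΔ x hxΔ (s t) (hs_nonneg t ht.1))
    (fun t ht => (hΦ₂' t ht.1).continuousAt.continuousWithinAt)
    (fun t ht => (hΦ₂' t ht.1).hasDerivWithinAt)
    (fun t ht => normalizedExpFlow_mem_stdSimplex hAnn hx hx0 ht.1) ?_ ⟨hT, le_rfl⟩⟩
  rw [hs, intervalIntegral.integral_same, hΦ0, normalizedExpFlow_zero,
    simplexNormalize_of_mem_stdSimplex hxΔ]

/-- Φ and Φ₂ have the same orbits up to reparametrization: Φ(s(t,x),x) = Φ₂(t,x) with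
s(t,x) = ∫₀ᵗ ⟨Φ₂(u,x)A, 1⟩ du, and t ↦ s(t,x) is strictly increasing. -/
theorem stmt14 {d : ℕ} (hd : 2 ≤ d) (A : Matrix (Fin d) (Fin d) ℝ)
    (hAnn : ∀ i j, 0 ≤ A i j)
    (hApos : ∀ y : Fin d → ℝ, (∀ i, 0 ≤ y i) → y ≠ 0 → 0 < ∑ j, Matrix.vecMul y A j)
    (Φ : ℝ → (Fin d → ℝ) → Fin d → ℝ)
    (hΦ0 : ∀ y, Φ 0 y = y)
    (hΦΔ : ∀ y : Fin d → ℝ, ((∀ i, 0 ≤ y i) ∧ ∑ i, y i = 1) → ∀ t : ℝ, 0 ≤ t →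
      (∀ i, 0 ≤ Φ t y i) ∧ ∑ i, Φ t y i = 1)
    (hode : ∀ y : Fin d → ℝ, ((∀ i, 0 ≤ y i) ∧ ∑ i, y i = 1) → ∀ t : ℝ, 0 ≤ t →
      HasDerivAt (fun u => Φ u y)
        (fun j => Matrix.vecMul (Φ t y) A j / (∑ k, Matrix.vecMul (Φ t y) A k) - Φ t y j) t)
    (x : Fin d → ℝ) (hx : ∀ i, 0 ≤ x i) (hx1 : ∑ i, x i = 1)
    (Φ₂ : ℝ → Fin d → ℝ)
    (hΦ₂ : ∀ t j, Φ₂ t j = Matrix.vecMul x (NormedSpace.exp (t • A)) j /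
        ∑ k, Matrix.vecMul x (NormedSpace.exp (t • A)) k)
    (s : ℝ → ℝ)
    (hs : ∀ t, s t = ∫ u in (0 : ℝ)..t, ∑ j, Matrix.vecMul (Φ₂ u) A j) :
    StrictMonoOn s (Set.Ici 0) ∧ ∀ t : ℝ, 0 ≤ t → Φ (s t) x = Φ₂ t :=
  stmt14_general A hAnn hApos Φ hΦ0 hΦΔ hode x hx hx1 Φ₂ hΦ₂ s hs
end
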